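/- Fix a null frame e_0 = ℓ, e_1 = n, m_2,…,m_{N−1} for the Minkowski form η on ℝ^N. Let (K^λ)_{λ∈Λ} be a family of skew-symmetric bilinear forms on ℝ^N that are null and mutually orthogonal in the bivector inner product, ⟨K^λ, K^μ⟩ = 0 for all λ, μ, and that share the alignment K^λ_{0i} = K^λ(ℓ, m_i) = 0 for all spatial i. Then there exist a skew-symmetric bilinear form M with ⟨M,M⟩ = 0 and M_{0i} = M_{1i} = 0 for all spatial i (a null, bi-aligned bivector), and scalars C_λ, such that K^λ_{ij} = C_λ M_{ij} and K^λ_{01} = C_λ M_{01} for every λ and all spatial i, j. -/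

import Mathlib

open Matrix

/-! Null-frame formalism: we work with the components of tensors with respect to a
null frame `e_0 = ℓ, e_1 = n, e_2 = m_2, …, e_{N−1} = m_{N−1}` for the Minkowski
form `η` on `ℝ^N` (so `η(ℓ,n) = 1`, `η(m_i,m_j) = δ_{ij}`, all other frame products
vanish).  `ηnf N` is the matrix of frame components `η_{AB}`, and `ηup N = (ηnf N)⁻¹`
is the matrix of the inverse-metric components `η^{AB}` used to raise indices.
Spatial indices are those `i : Fin N` with `2 ≤ i`. -/

/-- Frame components `η_{AB}` of the Minkowski form in a null frame. -/
def ηnf (N : ℕ) : Matrix (Fin N) (Fin N) ℝ :=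
  Matrix.of fun A B =>
    if ((A : ℕ) = 0 ∧ (B : ℕ) = 1) ∨ ((A : ℕ) = 1 ∧ (B : ℕ) = 0) then 1
    else if A = B ∧ 2 ≤ (A : ℕ) then 1 else 0

/-- Components `η^{AB}` of the inverse metric in a null frame. -/
noncomputable def ηup (N : ℕ) : Matrix (Fin N) (Fin N) ℝ := (ηnf N)⁻¹

/-- The bivector inner product in null-frame components:
`⟨J,K⟩ = (1/2) Σ_{a,b} J_{ab} K^{ab}` with indices raised by the inverse metric. -/
noncomputable def bivInner (N : ℕ) (J K : Matrix (Fin N) (Fin N) ℝ) : ℝ :=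
  (1 / 2 : ℝ) * ∑ a, ∑ b, ∑ a', ∑ b', J a b * ηup N a a' * ηup N b b' * K a' b'

/-!
Raising an index with `η` swaps `ℓ` and `n`, so for skew bivectors with `K_{0i} = 0` the
inner product splits as `⟨J,K⟩ = ½ Σ_{ij} J_{ij} K_{ij} - J_{01} K_{01}`. Mutual orthogonality
therefore says that the spatial blocks of the `K^λ` have Gram matrix `2 k_λ k_μ`, where
`k_λ = K^λ_{01}`; expanding `Σ_{ij} (k_μ K^λ_{ij} - k_λ K^μ_{ij})²` shows that it vanishes, so
all spatial blocks are proportional, with the same ratios as the `k_λ`. If some `k_{λ₀} ≠ 0`,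
`M` is `K^{λ₀}` with its mixed `{ℓ,n} × spatial` entries removed (still null, since those
entries do not contribute), and `C_λ = k_λ / k_{λ₀}`; otherwise every spatial block vanishes
and `M = 0`.
-/

theorem mul_eq_mul_of_sum_mul_self_eq {ι : Type*} {s : Finset ι} {f g : ι → ℝ} {a b c : ℝ}
    (hff : ∑ i ∈ s, f i * f i = c * (a * a)) (hfg : ∑ i ∈ s, f i * g i = c * (a * b))
    (hgg : ∑ i ∈ s, g i * g i = c * (b * b)) : ∀ i ∈ s, b * f i = a * g i := by
  have h : ∑ i ∈ s, (b * f i - a * g i) * (b * f i - a * g i) = 0 :=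
    calc ∑ i ∈ s, (b * f i - a * g i) * (b * f i - a * g i)
        = b * b * ∑ i ∈ s, f i * f i - 2 * a * b * ∑ i ∈ s, f i * g i
          + a * a * ∑ i ∈ s, g i * g i := by
          simp only [Finset.mul_sum, ← Finset.sum_sub_distrib, ← Finset.sum_add_distrib]
          exact Finset.sum_congr rfl fun i _ => by ring
      _ = 0 := by rw [hff, hfg, hgg]; ring
  intro i hi
  exact sub_eq_zero.mp ((Finset.sum_mul_self_eq_zero_iff s _).mp h i hi)

namespace NullFrame

variable {N : ℕ} {J K : Matrix (Fin N) (Fin N) ℝ}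

def swapLN (hN : 1 < N) : Equiv.Perm (Fin N) := Equiv.swap ⟨0, by omega⟩ ⟨1, by omega⟩

def spatial (N : ℕ) : Finset (Fin N) := Finset.univ.filter fun i => 2 ≤ (i : ℕ)

def spatialInner (N : ℕ) (J K : Matrix (Fin N) (Fin N) ℝ) : ℝ :=
  ∑ p ∈ spatial N ×ˢ spatial N, J p.1 p.2 * K p.1 p.2

theorem mem_spatial {i : Fin N} : i ∈ spatial N ↔ 2 ≤ (i : ℕ) := by
  simp [spatial]

theorem univ_eq_insert_insert_spatial (hN : 1 < N) :
    (Finset.univ : Finset (Fin N)) = insert ⟨0, by omega⟩ (insert ⟨1, by omega⟩ (spatial N)) := by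
  ext ⟨i, hi⟩
  simp only [mem_spatial, Finset.mem_univ, Finset.mem_insert, Fin.mk.injEq, true_iff]
  omega

theorem swapLN_apply_of_mem_spatial (hN : 1 < N) {i : Fin N} (hi : i ∈ spatial N) :
    swapLN hN i = i := by
  rw [mem_spatial] at hi
  exact Equiv.swap_apply_of_ne_of_ne (by grind) (by grind)

theorem ηnf_eq_permMatrix (hN : 1 < N) : ηnf N = (swapLN hN).permMatrix ℝ := by
  ext ⟨a, ha⟩ ⟨b, hb⟩
  simp only [ηnf, swapLN, Equiv.swap_apply_def, Matrix.of_apply, PEquiv.toMatrix_apply,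
    Equiv.toPEquiv_apply, Option.mem_def, Option.some.injEq, Fin.mk.injEq]
  split_ifs <;> grind

theorem ηup_eq_ηnf (hN : 1 < N) : ηup N = ηnf N := by
  rw [ηup, ηnf_eq_permMatrix hN]
  refine Matrix.inv_eq_left_inv ?_
  rw [← permMatrix_mul, swapLN, Equiv.swap_mul_self, permMatrix_one]

theorem bivInner_eq_sum_swapLN (hN : 1 < N) :
    bivInner N J K = 1 / 2 * ∑ a, ∑ b, J a b * K (swapLN hN a) (swapLN hN b) := by
  simp [bivInner, ηup_eq_ηnf hN, ηnf_eq_permMatrix hN, PEquiv.toMatrix_apply]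

theorem bivInner_eq_of_aligned (hN : 1 < N) (hJ : Jᵀ = -J) (hK : Kᵀ = -K)
    (hJ0 : ∀ i : Fin N, 2 ≤ (i : ℕ) → J ⟨0, by omega⟩ i = 0)
    (hK0 : ∀ i : Fin N, 2 ≤ (i : ℕ) → K ⟨0, by omega⟩ i = 0) :
    bivInner N J K = 1 / 2 * spatialInner N J K
      - J ⟨0, by omega⟩ ⟨1, by omega⟩ * K ⟨0, by omega⟩ ⟨1, by omega⟩ := by
  rw [bivInner_eq_sum_swapLN hN, univ_eq_insert_insert_spatial hN, spatialInner,
    Finset.sum_product' (f := fun i j => J i j * K i j)]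
  have hσℓ : swapLN hN ⟨0, by omega⟩ = ⟨1, by omega⟩ := Equiv.swap_apply_left _ _
  have hσn : swapLN hN ⟨1, by omega⟩ = ⟨0, by omega⟩ := Equiv.swap_apply_right _ _
  set ℓ : Fin N := ⟨0, by omega⟩
  set n : Fin N := ⟨1, by omega⟩
  have hJs (a b : Fin N) : J b a = -J a b := congrFun (congrFun hJ a) b
  have hKs (a b : Fin N) : K b a = -K a b := congrFun (congrFun hK a) b
  have hJℓ (i) (hi : i ∈ spatial N) : J ℓ i = 0 := hJ0 i (mem_spatial.mp hi)
  have hKℓ (i) (hi : i ∈ spatial N) : K ℓ i = 0 := hK0 i (mem_spatial.mp hi)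
  have hJℓ' (i) (hi : i ∈ spatial N) : J i ℓ = 0 := by rw [hJs, hJℓ i hi, neg_zero]
  have hKℓ' (i) (hi : i ∈ spatial N) : K i ℓ = 0 := by rw [hKs, hKℓ i hi, neg_zero]
  have hJℓℓ : J ℓ ℓ = 0 := by linarith [hJs ℓ ℓ]
  have hJnn : J n n = 0 := by linarith [hJs n n]
  have hℓ : ℓ ∉ insert n (spatial N) := by simp [ℓ, n, mem_spatial]
  have hn : n ∉ spatial N := by simp [n, mem_spatial]
  simp +contextual only [Finset.sum_insert hℓ, Finset.sum_insert hn, swapLN_apply_of_mem_spatial,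
    hσℓ, hσn, hJℓ, hKℓ, hJℓ', hKℓ', hJℓℓ, hJnn, hJs n ℓ, hKs n ℓ, zero_mul, mul_zero,
    Finset.sum_const_zero, zero_add, add_zero]
  ring

theorem eq_zero_of_spatialInner_self_eq_zero (hK : spatialInner N K K = 0) {i j : Fin N}
    (hi : 2 ≤ (i : ℕ)) (hj : 2 ≤ (j : ℕ)) : K i j = 0 :=
  (Finset.sum_mul_self_eq_zero_iff _ _).mp hK (i, j)
    (Finset.mk_mem_product (mem_spatial.mpr hi) (mem_spatial.mpr hj))

theorem mul_apply_eq_mul_apply_of_spatialInner_eq {a b c : ℝ}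
    (hJJ : spatialInner N J J = c * (a * a)) (hJK : spatialInner N J K = c * (a * b))
    (hKK : spatialInner N K K = c * (b * b)) {i j : Fin N} (hi : 2 ≤ (i : ℕ))
    (hj : 2 ≤ (j : ℕ)) : b * J i j = a * K i j :=
  mul_eq_mul_of_sum_mul_self_eq hJJ hJK hKK (i, j)
    (Finset.mk_mem_product (mem_spatial.mpr hi) (mem_spatial.mpr hj))

def blockDiagonalPart (K : Matrix (Fin N) (Fin N) ℝ) : Matrix (Fin N) (Fin N) ℝ :=
  Matrix.of fun a b => if (2 ≤ (a : ℕ) ↔ 2 ≤ (b : ℕ)) then K a b else 0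

theorem blockDiagonalPart_apply_of_iff {a b : Fin N} (h : 2 ≤ (a : ℕ) ↔ 2 ≤ (b : ℕ)) :
    blockDiagonalPart K a b = K a b :=
  if_pos h

theorem blockDiagonalPart_apply_of_not_iff {a b : Fin N} (h : ¬(2 ≤ (a : ℕ) ↔ 2 ≤ (b : ℕ))) :
    blockDiagonalPart K a b = 0 :=
  if_neg h

theorem transpose_blockDiagonalPart : (blockDiagonalPart K)ᵀ = blockDiagonalPart Kᵀ := by
  ext a b
  simp only [blockDiagonalPart, transpose_apply, of_apply, iff_comm]

theorem blockDiagonalPart_neg : blockDiagonalPart (-K) = -blockDiagonalPart K := by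
  ext a b
  by_cases h : 2 ≤ (a : ℕ) ↔ 2 ≤ (b : ℕ)
  · rw [neg_apply, blockDiagonalPart_apply_of_iff h, blockDiagonalPart_apply_of_iff h, neg_apply]
  · rw [neg_apply, blockDiagonalPart_apply_of_not_iff h, blockDiagonalPart_apply_of_not_iff h,
      neg_zero]

theorem transpose_blockDiagonalPart_of_skew (hK : Kᵀ = -K) :
    (blockDiagonalPart K)ᵀ = -blockDiagonalPart K := by
  rw [transpose_blockDiagonalPart, hK, blockDiagonalPart_neg]

theorem blockDiagonalPart_apply_null_spatial (hN : 1 < N) (i : Fin N) (hi : 2 ≤ (i : ℕ)) :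
    blockDiagonalPart K ⟨0, by omega⟩ i = 0 ∧ blockDiagonalPart K ⟨1, by omega⟩ i = 0 :=
  ⟨blockDiagonalPart_apply_of_not_iff (by simp; omega),
    blockDiagonalPart_apply_of_not_iff (by simp; omega)⟩

theorem spatialInner_blockDiagonalPart :
    spatialInner N (blockDiagonalPart J) (blockDiagonalPart K) = spatialInner N J K := by
  refine Finset.sum_congr rfl fun p hp => ?_
  obtain ⟨h1, h2⟩ := Finset.mem_product.mp hp
  have h : 2 ≤ (p.1 : ℕ) ↔ 2 ≤ (p.2 : ℕ) := iff_of_true (mem_spatial.mp h1) (mem_spatial.mp h2)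
  rw [blockDiagonalPart_apply_of_iff h, blockDiagonalPart_apply_of_iff h]

theorem bivInner_blockDiagonalPart_self (hN : 1 < N) (hK : Kᵀ = -K)
    (hK0 : ∀ i : Fin N, 2 ≤ (i : ℕ) → K ⟨0, by omega⟩ i = 0) :
    bivInner N (blockDiagonalPart K) (blockDiagonalPart K) = bivInner N K K := by
  have hM := transpose_blockDiagonalPart_of_skew hK
  have hM0 i hi := (blockDiagonalPart_apply_null_spatial (K := K) hN i hi).1
  rw [bivInner_eq_of_aligned hN hM hM hM0 hM0, bivInner_eq_of_aligned hN hK hK hK0 hK0,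
    spatialInner_blockDiagonalPart, blockDiagonalPart_apply_of_iff (by simp)]

end NullFrame

open NullFrame

/-- **Proposition C.3** (`prop:aligned-ortho`): let `(K^λ)` be a family of null,
mutually orthogonal bivectors (skew-symmetric bilinear forms, given here by their
null-frame components) with a common alignment `K^λ_{0i} = 0` for all spatial `i`.
Then there is a null, bi-aligned bivector `M` (`⟨M,M⟩ = 0`, `M_{0i} = M_{1i} = 0`) and
scalars `C_λ` with `K^λ_{ij} = C_λ M_{ij}` and `K^λ_{01} = C_λ M_{01}`. -/
theorem aligned_orthogonal_bivectors (N : ℕ) (hN : 2 ≤ N) {Λ : Type*}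
    (K : Λ → Matrix (Fin N) (Fin N) ℝ)
    (hskew : ∀ l, (K l)ᵀ = -(K l))
    (horth : ∀ l m : Λ, bivInner N (K l) (K m) = 0)
    (halign : ∀ l, ∀ i : Fin N, 2 ≤ (i : ℕ) → K l ⟨0, by omega⟩ i = 0) :
    ∃ M : Matrix (Fin N) (Fin N) ℝ, Mᵀ = -M ∧ bivInner N M M = 0 ∧
      (∀ i : Fin N, 2 ≤ (i : ℕ) → M ⟨0, by omega⟩ i = 0 ∧ M ⟨1, by omega⟩ i = 0) ∧
      ∃ C : Λ → ℝ, ∀ l,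
        (∀ i j : Fin N, 2 ≤ (i : ℕ) → 2 ≤ (j : ℕ) → K l i j = C l * M i j) ∧
        K l ⟨0, by omega⟩ ⟨1, by omega⟩ = C l * M ⟨0, by omega⟩ ⟨1, by omega⟩ := by
  have hgram (l m : Λ) : spatialInner N (K l) (K m) =
      2 * (K l ⟨0, by omega⟩ ⟨1, by omega⟩ * K m ⟨0, by omega⟩ ⟨1, by omega⟩) := by
    have h := horth l m
    rw [bivInner_eq_of_aligned hN (hskew l) (hskew m) (halign l) (halign m)] at h
    linarith
  by_cases hk : ∀ l, K l ⟨0, by omega⟩ ⟨1, by omega⟩ = 0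
  · refine ⟨0, by simp, by simp [bivInner], fun _ _ => ⟨rfl, rfl⟩, 0,
      fun l => ⟨fun i j hi hj => ?_, by simp [hk l]⟩⟩
    simpa using eq_zero_of_spatialInner_self_eq_zero (by simp [hgram, hk l]) hi hj
  obtain ⟨l₀, hl₀⟩ := not_forall.mp hk
  refine ⟨blockDiagonalPart (K l₀), transpose_blockDiagonalPart_of_skew (hskew l₀),
    by rw [bivInner_blockDiagonalPart_self hN (hskew l₀) (halign l₀), horth],
    blockDiagonalPart_apply_null_spatial hN,
    fun l => K l ⟨0, by omega⟩ ⟨1, by omega⟩ / K l₀ ⟨0, by omega⟩ ⟨1, by omega⟩,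
    fun l => ⟨fun i j hi hj => ?_, ?_⟩⟩
  · rw [blockDiagonalPart_apply_of_iff (iff_of_true hi hj), div_mul_eq_mul_div, eq_div_iff hl₀,
      mul_comm]
    exact mul_apply_eq_mul_apply_of_spatialInner_eq (hgram l l) (hgram l l₀) (hgram l₀ l₀) hi hj
  · rw [blockDiagonalPart_apply_of_iff (by simp), div_mul_cancel₀ _ hl₀]
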